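/- arXiv:2311.18570 — 3 statements merged into one kernel-verified Lean document; each statement's English description precedes it below -/
import Mathlib

section
/- Let U, V ⊆ ℝⁿ be nonempty open sets, ψ : closure U → closure V and φ : closure V → closure V bi-Lipschitz maps (with respect to the Euclidean metric), and suppose φ(p) = p for all p ∈ ∂V. Then the map Φ : ℝⁿ → ℝⁿ defined by Φ(p) = p for p ∉ U and Φ(p) = ψ⁻¹(φ(ψ(p))) for p ∈ closure U is well-defined and bi-Lipschitz. -/
open Classical

/-- A preconnected set meeting both `t` and `tᶜ` meets the frontier of `t`. -/
lemma aux_cross {X : Type*} [TopologicalSpace X] {s t : Set X} (hs : IsPreconnected s)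
    {x y : X} (hx : x ∈ s) (hxt : x ∈ t) (hy : y ∈ s) (hyt : y ∉ t) :
    (s ∩ frontier t).Nonempty := by
  by_contra h
  rw [Set.not_nonempty_iff_eq_empty] at h
  have hne : ∀ z ∈ s, z ∉ frontier t := by
    intro z hz hzf
    rw [Set.eq_empty_iff_forall_notMem] at h
    exact h z ⟨hz, hzf⟩
  have hsub : s ⊆ interior t ∪ (closure t)ᶜ := by
    intro z hz
    by_cases hz1 : z ∈ closure t
    · left
      by_contra hzi
      exact hne z hz ⟨hz1, hzi⟩
    · right; exact hz1
  have hxu : x ∈ s ∩ interior t := by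
    refine ⟨hx, ?_⟩
    by_contra hxi
    exact hne x hx ⟨subset_closure hxt, hxi⟩
  have hyv : y ∈ s ∩ (closure t)ᶜ := by
    refine ⟨hy, fun hyc => ?_⟩
    rcases hsub hy with h1 | h1
    · exact hyt (interior_subset h1)
    · exact h1 hyc
  obtain ⟨z, -, hz1, hz2⟩ := hs (interior t) (closure t)ᶜ isOpen_interior
    isClosed_closure.isOpen_compl hsub ⟨x, hxu⟩ ⟨y, hyv⟩
  exact hz2 (subset_closure (interior_subset hz1))

/-- The forward direction: the conjugated map is the identity off `U` and Lipschitz. -/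
lemma aux_fwd {n : ℕ} (U V : Set (EuclideanSpace ℝ (Fin n)))
    (hUo : IsOpen U) (hVo : IsOpen V)
    (ψ ψinv φ : EuclideanSpace ℝ (Fin n) → EuclideanSpace ℝ (Fin n))
    (hψU : ψ '' U = V) (hψcl : ∀ p ∈ closure U, ψ p ∈ closure V)
    (hψinv : ∀ p ∈ closure U, ψinv (ψ p) = p)
    (hψinv' : ∀ q ∈ closure V, ψinv q ∈ closure U ∧ ψ (ψinv q) = q)
    (Cψ : ℝ) (hCψ : 1 ≤ Cψ)
    (hψlip : ∀ p ∈ closure U, ∀ q ∈ closure U,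
      (1 / Cψ) * dist p q ≤ dist (ψ p) (ψ q) ∧ dist (ψ p) (ψ q) ≤ Cψ * dist p q)
    (hφmem : ∀ x ∈ closure V, φ x ∈ closure V)
    (Cφ : ℝ) (hCφ : 1 ≤ Cφ)
    (hφub : ∀ p ∈ closure V, ∀ q ∈ closure V, dist (φ p) (φ q) ≤ Cφ * dist p q)
    (hφbd : ∀ p ∈ frontier V, φ p = p)
    (Φ : EuclideanSpace ℝ (Fin n) → EuclideanSpace ℝ (Fin n))
    (hΦin : ∀ p ∈ closure U, Φ p = ψinv (φ (ψ p)))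
    (hΦout : ∀ p ∉ closure U, Φ p = p) :
    (∀ p ∉ U, Φ p = p) ∧
      (∀ p q, dist (Φ p) (Φ q) ≤ (Cψ * Cψ * Cφ) * dist p q) := by
  have hCψ0 : (0:ℝ) < Cψ := lt_of_lt_of_le one_pos hCψ
  have hCφ0 : (0:ℝ) < Cφ := lt_of_lt_of_le one_pos hCφ
  set K : ℝ := Cψ * Cψ * Cφ with hKdef
  have hK1 : (1:ℝ) ≤ K := by nlinarith
  have hK0 : (0:ℝ) < K := lt_of_lt_of_le one_pos hK1
  -- identity off U
  have hid : ∀ p ∉ U, Φ p = p := by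
    intro p hp
    by_cases hpc : p ∈ closure U
    · have h1 : ψ p ∈ closure V := hψcl p hpc
      have h2 : ψ p ∉ V := by
        intro hpv
        rw [← hψU] at hpv
        obtain ⟨q, hq, hqe⟩ := hpv
        have : p = q := by
          have e1 := hψinv p hpc
          have e2 := hψinv q (subset_closure hq)
          rw [← e1, ← hqe, e2]
        exact hp (this ▸ hq)
      have h3 : ψ p ∈ frontier V := by
        rw [hVo.frontier_eq]; exact ⟨h1, h2⟩
      rw [hΦin p hpc, hφbd _ h3, hψinv p hpc]
    · exact hΦout p hpc
  -- ψinv is Lipschitz with constant Cψ on closure V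
  have hψinvlip : ∀ a ∈ closure V, ∀ b ∈ closure V,
      dist (ψinv a) (ψinv b) ≤ Cψ * dist a b := by
    intro a ha b hb
    have h1 := (hψlip _ (hψinv' a ha).1 _ (hψinv' b hb).1).1
    rw [(hψinv' a ha).2, (hψinv' b hb).2] at h1
    rw [one_div_mul_eq_div, div_le_iff₀ hCψ0] at h1
    linarith [mul_comm (dist a b) Cψ]
  -- bound on closure U
  have hcl : ∀ p ∈ closure U, ∀ q ∈ closure U, dist (Φ p) (Φ q) ≤ K * dist p q := by
    intro p hp q hq
    rw [hΦin p hp, hΦin q hq]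
    have h1 : ψ p ∈ closure V := hψcl p hp
    have h2 : ψ q ∈ closure V := hψcl q hq
    have h3 := hψinvlip _ (hφmem _ h1) _ (hφmem _ h2)
    have h4 := hφub _ h1 _ h2
    have h5 := (hψlip p hp q hq).2
    calc dist (ψinv (φ (ψ p))) (ψinv (φ (ψ q))) ≤ Cψ * dist (φ (ψ p)) (φ (ψ q)) := h3
      _ ≤ Cψ * (Cφ * dist (ψ p) (ψ q)) := by nlinarith
      _ ≤ Cψ * (Cφ * (Cψ * dist p q)) := by nlinarith [dist_nonneg (x := ψ p) (y := ψ q)]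
      _ = K * dist p q := by ring
  refine ⟨hid, ?_⟩
  -- mixed-case helper
  have hmix : ∀ p ∈ closure U, ∀ q ∉ closure U, dist (Φ p) (Φ q) ≤ K * dist p q := by
    intro p hp q hq
    obtain ⟨r, hrseg, hrf⟩ := aux_cross (convex_segment p q).isPreconnected
      (left_mem_segment ℝ p q) hp (right_mem_segment ℝ p q) hq
    have hrU : r ∉ U := by
      have := frontier_closure_subset hrf
      rw [hUo.frontier_eq] at this
      exact this.2
    have hrcl' : r ∈ closure U := by
      have : r ∈ closure (closure U) := hrf.1
      rwa [closure_closure] at this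
    have hΦr : Φ r = r := hid r hrU
    have hdist : dist p r + dist r q = dist p q := dist_add_dist_of_mem_segment hrseg
    have h1 : dist (Φ p) (Φ q) ≤ dist (Φ p) (Φ r) + dist (Φ r) (Φ q) := dist_triangle _ _ _
    have h2 : dist (Φ p) (Φ r) ≤ K * dist p r := hcl p hp r hrcl'
    have h3 : dist (Φ r) (Φ q) = dist r q := by rw [hΦr, hΦout q hq]
    nlinarith [dist_nonneg (x := r) (y := q)]
  intro p q
  by_cases hp : p ∈ closure U <;> by_cases hq : q ∈ closure U
  · exact hcl p hp q hq
  · exact hmix p hp q hq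
  · rw [dist_comm (Φ p) (Φ q), dist_comm p q]; exact hmix q hq p hp
  · rw [hΦout p hp, hΦout q hq]
    nlinarith [dist_nonneg (x := p) (y := q)]

/-- Extension of a bi-Lipschitz map conjugated into a region, by the identity outside:
if `ψ : closure U → closure V` and `φ : closure V → closure V` are bi-Lipschitz and `φ`
fixes the boundary of `V` pointwise, then the map `Φ` equal to `ψ⁻¹ ∘ φ ∘ ψ` on
`closure U` and the identity elsewhere is well-defined (it is the identity off `U`)
and bi-Lipschitz on `ℝⁿ`. -/
theorem stmt_1 {n : ℕ} (U V : Set (EuclideanSpace ℝ (Fin n)))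
    (hUo : IsOpen U) (hVo : IsOpen V) (hUne : U.Nonempty) (hVne : V.Nonempty)
    (ψ ψinv φ : EuclideanSpace ℝ (Fin n) → EuclideanSpace ℝ (Fin n))
    (hψU : ψ '' U = V) (hψcl : ψ '' closure U = closure V)
    (hψinv : ∀ p ∈ closure U, ψinv (ψ p) = p)
    (hψinv' : ∀ q ∈ closure V, ψinv q ∈ closure U ∧ ψ (ψinv q) = q)
    (Cψ : ℝ) (hCψ : 1 ≤ Cψ)
    (hψlip : ∀ p ∈ closure U, ∀ q ∈ closure U,
      (1 / Cψ) * dist p q ≤ dist (ψ p) (ψ q) ∧ dist (ψ p) (ψ q) ≤ Cψ * dist p q)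
    (hφcl : φ '' closure V = closure V)
    (Cφ : ℝ) (hCφ : 1 ≤ Cφ)
    (hφlip : ∀ p ∈ closure V, ∀ q ∈ closure V,
      (1 / Cφ) * dist p q ≤ dist (φ p) (φ q) ∧ dist (φ p) (φ q) ≤ Cφ * dist p q)
    (hφbd : ∀ p ∈ frontier V, φ p = p) :
    ∀ Φ : EuclideanSpace ℝ (Fin n) → EuclideanSpace ℝ (Fin n),
      (Φ = fun p => if p ∈ closure U then ψinv (φ (ψ p)) else p) →
      (∀ p ∉ U, Φ p = p) ∧
      ∃ K : ℝ, 1 ≤ K ∧ ∀ p q,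
        (1 / K) * dist p q ≤ dist (Φ p) (Φ q) ∧ dist (Φ p) (Φ q) ≤ K * dist p q := by
  intro Φ hΦ
  have hCψ0 : (0:ℝ) < Cψ := lt_of_lt_of_le one_pos hCψ
  have hCφ0 : (0:ℝ) < Cφ := lt_of_lt_of_le one_pos hCφ
  have hΦin : ∀ p ∈ closure U, Φ p = ψinv (φ (ψ p)) := by
    intro p hp; rw [hΦ]; simp [hp]
  have hΦout : ∀ p ∉ closure U, Φ p = p := by
    intro p hp; rw [hΦ]; simp [hp]
  have hψclmem : ∀ p ∈ closure U, ψ p ∈ closure V := by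
    intro p hp; rw [← hψcl]; exact Set.mem_image_of_mem ψ hp
  have hφmem : ∀ x ∈ closure V, φ x ∈ closure V := by
    intro x hx; rw [← hφcl]; exact Set.mem_image_of_mem φ hx
  -- injectivity of φ on closure V
  have hφinj : ∀ a ∈ closure V, ∀ b ∈ closure V, φ a = φ b → a = b := by
    intro a ha b hb he
    have h1 := (hφlip a ha b hb).1
    rw [he, dist_self, one_div_mul_eq_div, div_le_iff₀ hCφ0] at h1
    have : dist a b ≤ 0 := by simpa using h1
    exact dist_le_zero.1 this
  -- inverse of φ
  set φinv : EuclideanSpace ℝ (Fin n) → EuclideanSpace ℝ (Fin n) :=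
    fun y => if h : ∃ x ∈ closure V, φ x = y then h.choose else y with hφinvdef
  have hφinv' : ∀ y ∈ closure V, φinv y ∈ closure V ∧ φ (φinv y) = y := by
    intro y hy
    have hex : ∃ x ∈ closure V, φ x = y := by
      rw [← hφcl] at hy
      obtain ⟨x, hx, he⟩ := hy
      exact ⟨x, hx, he⟩
    rw [hφinvdef]; simp only [hex, dif_pos]
    exact ⟨hex.choose_spec.1, hex.choose_spec.2⟩
  have hφinv : ∀ x ∈ closure V, φinv (φ x) = x := by
    intro x hx
    have h1 := hφinv' (φ x) (hφmem x hx)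
    exact hφinj _ h1.1 _ hx h1.2
  have hφinvlip : ∀ a ∈ closure V, ∀ b ∈ closure V,
      dist (φinv a) (φinv b) ≤ Cφ * dist a b := by
    intro a ha b hb
    have h1 := (hφlip _ (hφinv' a ha).1 _ (hφinv' b hb).1).1
    rw [(hφinv' a ha).2, (hφinv' b hb).2] at h1
    rw [one_div_mul_eq_div, div_le_iff₀ hCφ0] at h1
    linarith [mul_comm (dist a b) Cφ]
  have hφinvmem : ∀ y ∈ closure V, φinv y ∈ closure V := fun y hy => (hφinv' y hy).1
  have hφinvbd : ∀ p ∈ frontier V, φinv p = p := by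
    intro p hp
    have hpc : p ∈ closure V := frontier_subset_closure hp
    calc φinv p = φinv (φ p) := by rw [hφbd p hp]
      _ = p := hφinv p hpc
  -- forward direction
  obtain ⟨hid, hub⟩ := aux_fwd U V hUo hVo ψ ψinv φ hψU hψclmem hψinv hψinv' Cψ hCψ hψlip
    hφmem Cφ hCφ (fun p hp q hq => (hφlip p hp q hq).2) hφbd Φ hΦin hΦout
  -- inverse direction
  set Φ' : EuclideanSpace ℝ (Fin n) → EuclideanSpace ℝ (Fin n) :=
    fun p => if p ∈ closure U then ψinv (φinv (ψ p)) else p with hΦ'def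
  have hΦ'in : ∀ p ∈ closure U, Φ' p = ψinv (φinv (ψ p)) := by
    intro p hp; rw [hΦ'def]; simp [hp]
  have hΦ'out : ∀ p ∉ closure U, Φ' p = p := by
    intro p hp; rw [hΦ'def]; simp [hp]
  obtain ⟨hid', hub'⟩ := aux_fwd U V hUo hVo ψ ψinv φinv hψU hψclmem hψinv hψinv' Cψ hCψ hψlip
    hφinvmem Cφ hCφ hφinvlip hφinvbd Φ' hΦ'in hΦ'out
  -- left inverse
  have hLI : ∀ p, Φ' (Φ p) = p := by
    intro p
    by_cases hp : p ∈ closure U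
    · have h1 : ψ p ∈ closure V := hψclmem p hp
      have h2 : φ (ψ p) ∈ closure V := hφmem _ h1
      have h3 : Φ p ∈ closure U := by rw [hΦin p hp]; exact (hψinv' _ h2).1
      rw [hΦ'in _ h3, hΦin p hp, (hψinv' _ h2).2, hφinv _ h1, hψinv p hp]
    · rw [hΦout p hp, hΦ'out p hp]
  set K : ℝ := Cψ * Cψ * Cφ with hKdef
  have hK1 : (1:ℝ) ≤ K := by nlinarith
  have hK0 : (0:ℝ) < K := lt_of_lt_of_le one_pos hK1
  refine ⟨hid, K, hK1, fun p q => ⟨?_, hub p q⟩⟩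
  have h1 := hub' (Φ p) (Φ q)
  rw [hLI p, hLI q] at h1
  rw [one_div_mul_eq_div, div_le_iff₀ hK0]
  linarith [mul_comm (dist (Φ p) (Φ q)) K]
end

section
/- Let P, Q, R ∈ ℝⁿ be distinct points and T > 1 such that cos(∠PQR) ≤ 1 − 2/T². Then dist(P,Q) + dist(Q,R) ≤ T · dist(P,R). -/
/-- If `cos (∠ P Q R) ≤ 1 - 2/T²` for distinct points `P Q R` and `T > 1`, then
`dist P Q + dist Q R ≤ T * dist P R`. -/
theorem stmt_2 {n : ℕ} (P Q R : EuclideanSpace ℝ (Fin n))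
    (hPQ : P ≠ Q) (hQR : Q ≠ R) (hPR : P ≠ R)
    (T : ℝ) (hT : 1 < T)
    (h : Real.cos (EuclideanGeometry.angle P Q R) ≤ 1 - 2 / T ^ 2) :
    dist P Q + dist Q R ≤ T * dist P R := by
  have law := EuclideanGeometry.law_cos P Q R
  rw [dist_comm R Q] at law
  set a := dist P Q
  set b := dist Q R
  set c := dist P R
  have ha : 0 < a := dist_pos.2 hPQ
  have hb : 0 < b := dist_pos.2 hQR
  have hc : 0 < c := dist_pos.2 hPR
  have hT0 : (0:ℝ) < T := by linarith
  have hT2 : (0:ℝ) < T ^ 2 := by positivity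
  have hab : 0 < a * b := mul_pos ha hb
  have key : c ^ 2 ≥ (a - b) ^ 2 + 4 * (a * b) / T ^ 2 := by
    have h1 : 2 * a * b * Real.cos (EuclideanGeometry.angle P Q R) ≤ 2 * a * b * (1 - 2 / T ^ 2) := by
      apply mul_le_mul_of_nonneg_left h (by positivity)
    have h2 : 2 * a * b * (2 / T ^ 2) = 4 * (a * b) / T ^ 2 := by ring
    nlinarith [h1]
  have key2 : (a + b) ^ 2 ≤ (T * c) ^ 2 := by
    have h3 : T ^ 2 * ((a - b) ^ 2 + 4 * (a * b) / T ^ 2) = T ^ 2 * (a - b) ^ 2 + 4 * (a * b) := by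
      field_simp
    nlinarith [sq_nonneg (a - b), sq_nonneg (T - 1), mul_le_mul_of_nonneg_left key (le_of_lt hT2)]
  exact (pow_le_pow_iff_left₀ (by positivity) (by positivity) two_ne_zero).mp key2
end

section
/- Let x₁ < x₂ be real numbers and f, g : [x₁,x₂] → ℝ piecewise smooth functions with g(x) ≤ f(x) for all x, and suppose there is M > 0 with |f′(x)| < M and |g′(x)| < M at all points of differentiability. Then the region X = {(x,y) ∈ ℝ² : x₁ ≤ x ≤ x₂, g(x) ≤ y ≤ f(x)} is Lipschitz normally embedded, with LNE constant depending only on M. -/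
/-- The inner (length-metric) distance between two points of a subset `X`:
the infimum of lengths (`eVariationOn`) of paths `γ : [0,1] → X` joining them. -/
noncomputable def innerDist {E : Type*} [PseudoEMetricSpace E] (X : Set E) (a b : E) : ENNReal :=
  ⨅ (γ : ℝ → E) (_ : γ 0 = a ∧ γ 1 = b ∧ ∀ t ∈ Set.Icc (0:ℝ) 1, γ t ∈ X),
    eVariationOn γ (Set.Icc 0 1)

private lemma base_bound {f : ℝ → ℝ} {M x y : ℝ} (hxy : x ≤ y)
    (hc : ContinuousOn f (Set.Icc x y))
    (hd : ∀ u ∈ Set.Ioo x y, DifferentiableAt ℝ f u ∧ deriv f u ≤ M) :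
    f y - f x ≤ M * (y - x) := by
  have hmono : MonotoneOn (fun u => M * u - f u) (Set.Icc x y) := by
    apply monotoneOn_of_deriv_nonneg (convex_Icc x y)
    · exact (continuousOn_const.mul continuousOn_id).sub hc
    · intro u hu
      rw [interior_Icc] at hu
      exact (((hasDerivAt_id u).const_mul M).sub
        (hd u hu).1.hasDerivAt).differentiableAt.differentiableWithinAt
    · intro u hu
      rw [interior_Icc] at hu
      have h1 : deriv (fun u => M * u - f u) u = M * 1 - deriv f u :=
        (((hasDerivAt_id u).const_mul M).sub (hd u hu).1.hasDerivAt).deriv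
      rw [h1]
      linarith [(hd u hu).2]
  have := hmono (Set.left_mem_Icc.2 hxy) (Set.right_mem_Icc.2 hxy) hxy
  dsimp at this
  linarith

private lemma ind_bound {f : ℝ → ℝ} {M : ℝ} (S : Finset ℝ) :
    ∀ x y : ℝ, x ≤ y → ContinuousOn f (Set.Icc x y) →
    (∀ u ∈ Set.Ioo x y, u ∉ S → DifferentiableAt ℝ f u ∧ deriv f u ≤ M) →
    f y - f x ≤ M * (y - x) := by
  induction S using Finset.induction_on with
  | empty =>
    intro x y hxy hc hd
    exact base_bound hxy hc fun u hu => hd u hu (Finset.notMem_empty u)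
  | @insert s T hs ih =>
    intro x y hxy hc hd
    by_cases hmem : s ∈ Set.Ioo x y
    · have h1 : f s - f x ≤ M * (s - x) := by
        apply ih x s hmem.1.le (hc.mono (Set.Icc_subset_Icc le_rfl hmem.2.le))
        intro u hu hu'
        refine hd u ⟨hu.1, hu.2.trans hmem.2⟩ fun h => ?_
        rcases Finset.mem_insert.1 h with h | h
        · exact absurd h (ne_of_lt hu.2)
        · exact hu' h
      have h2 : f y - f s ≤ M * (y - s) := by
        apply ih s y hmem.2.le (hc.mono (Set.Icc_subset_Icc hmem.1.le le_rfl))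
        intro u hu hu'
        refine hd u ⟨hmem.1.trans hu.1, hu.2⟩ fun h => ?_
        rcases Finset.mem_insert.1 h with h | h
        · exact absurd h.symm (ne_of_lt hu.1)
        · exact hu' h
      linarith
    · apply ih x y hxy hc
      intro u hu hu'
      refine hd u hu fun h => ?_
      rcases Finset.mem_insert.1 h with h | h
      · exact hmem (h ▸ hu)
      · exact hu' h

/-- Lipschitz bound for a continuous function with `|deriv| ≤ M` off a finite set. -/
private lemma lip_bound {f : ℝ → ℝ} {M x₁ x₂ : ℝ} (S : Finset ℝ)
    (hc : ContinuousOn f (Set.Icc x₁ x₂))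
    (hd : ∀ u ∈ Set.Icc x₁ x₂, u ∉ S → DifferentiableAt ℝ f u ∧ |deriv f u| < M)
    {x y : ℝ} (hx : x ∈ Set.Icc x₁ x₂) (hy : y ∈ Set.Icc x₁ x₂) :
    |f y - f x| ≤ M * |y - x| := by
  wlog hxy : x ≤ y generalizing x y
  · have := this hy hx (le_of_not_ge hxy)
    rwa [abs_sub_comm (f x) (f y), abs_sub_comm x y] at this
  have hIcc : Set.Icc x y ⊆ Set.Icc x₁ x₂ := Set.Icc_subset_Icc hx.1 hy.2
  have key : ∀ u ∈ Set.Ioo x y, u ∉ S → DifferentiableAt ℝ f u ∧ |deriv f u| < M :=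
    fun u hu hu' => hd u (hIcc (Set.Ioo_subset_Icc_self hu)) hu'
  have h1 : f y - f x ≤ M * (y - x) := by
    apply ind_bound S x y hxy (hc.mono hIcc)
    intro u hu hu'
    exact ⟨(key u hu hu').1, ((le_abs_self _).trans (key u hu hu').2.le)⟩
  have h2 : (fun u => -f u) y - (fun u => -f u) x ≤ M * (y - x) := by
    apply ind_bound S x y hxy (hc.mono hIcc).neg
    intro u hu hu'
    refine ⟨(key u hu hu').1.neg, ?_⟩
    rw [deriv.neg]
    have := (key u hu hu').2
    rw [abs_lt] at this
    linarith
  rw [abs_of_nonneg (by linarith : (0:ℝ) ≤ y - x)]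
  simp only at h2
  rw [abs_le]
  constructor <;> linarith

private lemma coord_le_dist (a b : EuclideanSpace ℝ (Fin 2)) (i : Fin 2) :
    |a i - b i| ≤ dist a b := by
  rw [EuclideanSpace.dist_eq, Fin.sum_univ_two]
  rw [← Real.sqrt_sq_eq_abs]
  apply Real.sqrt_le_sqrt
  fin_cases i <;> simp [Real.dist_eq, sq_abs] <;> positivity

private lemma dist_pair_le (u v u' v' : ℝ) :
    dist ((WithLp.equiv 2 (Fin 2 → ℝ)).symm ![u, v] : EuclideanSpace ℝ (Fin 2))
      ((WithLp.equiv 2 (Fin 2 → ℝ)).symm ![u', v']) ≤ |u - u'| + |v - v'| := by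
  rw [EuclideanSpace.dist_eq, Fin.sum_univ_two]
  simp only [WithLp.equiv_symm_apply, PiLp.toLp_apply, Matrix.cons_val_zero, Matrix.cons_val_one,
    Matrix.head_cons, Real.dist_eq]
  rw [show |u - u'| ^ 2 + |v - v'| ^ 2 = (u - u') ^ 2 + (v - v') ^ 2 by rw [sq_abs, sq_abs]]
  have h : (u - u') ^ 2 + (v - v') ^ 2 ≤ (|u - u'| + |v - v'|) ^ 2 := by
    nlinarith [sq_abs (u - u'), sq_abs (v - v'),
      mul_nonneg (abs_nonneg (u - u')) (abs_nonneg (v - v'))]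
  calc Real.sqrt ((u - u') ^ 2 + (v - v') ^ 2) ≤ Real.sqrt ((|u - u'| + |v - v'|) ^ 2) :=
        Real.sqrt_le_sqrt h
    _ = |u - u'| + |v - v'| := Real.sqrt_sq (by positivity)

/-- The region between the graphs of two piecewise smooth functions with derivatives
bounded by `M` is Lipschitz normally embedded, with LNE constant depending only on `M`. -/
theorem stmt_3 :
    ∀ M : ℝ, 0 < M → ∃ N : ℝ, 1 ≤ N ∧
      ∀ (x₁ x₂ : ℝ), x₁ < x₂ → ∀ f g : ℝ → ℝ,
        ContinuousOn f (Set.Icc x₁ x₂) → ContinuousOn g (Set.Icc x₁ x₂) →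
        (∀ x ∈ Set.Icc x₁ x₂, g x ≤ f x) →
        ∀ S : Finset ℝ,
          (∀ x ∈ Set.Icc x₁ x₂, x ∉ S → DifferentiableAt ℝ f x ∧ |deriv f x| < M) →
          (∀ x ∈ Set.Icc x₁ x₂, x ∉ S → DifferentiableAt ℝ g x ∧ |deriv g x| < M) →
          ∀ a ∈ {p : EuclideanSpace ℝ (Fin 2) |
              x₁ ≤ p 0 ∧ p 0 ≤ x₂ ∧ g (p 0) ≤ p 1 ∧ p 1 ≤ f (p 0)},
            ∀ b ∈ {p : EuclideanSpace ℝ (Fin 2) |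
              x₁ ≤ p 0 ∧ p 0 ≤ x₂ ∧ g (p 0) ≤ p 1 ∧ p 1 ≤ f (p 0)},
              innerDist {p : EuclideanSpace ℝ (Fin 2) |
                  x₁ ≤ p 0 ∧ p 0 ≤ x₂ ∧ g (p 0) ≤ p 1 ∧ p 1 ≤ f (p 0)} a b ≤
                ENNReal.ofReal (N * dist a b) := by
  intro M hM
  refine ⟨M + 2, by linarith, ?_⟩
  intro x₁ x₂ hx12 f g hfc hgc hgf S hfd hgd a ha b hb
  obtain ⟨ha1, ha2, ha3, ha4⟩ := ha
  obtain ⟨hb1, hb2, hb3, hb4⟩ := hb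
  set d := dist a b with hd
  have hd0 : 0 ≤ d := dist_nonneg
  -- the path
  set xc : ℝ → ℝ := fun t => a 0 + t * (b 0 - a 0) with hxc
  set lc : ℝ → ℝ := fun t => a 1 + t * (b 1 - a 1) with hlc
  set yc : ℝ → ℝ := fun t => max (g (xc t)) (min (f (xc t)) (lc t)) with hyc
  set γ : ℝ → EuclideanSpace ℝ (Fin 2) :=
    fun t => (WithLp.equiv 2 (Fin 2 → ℝ)).symm ![xc t, yc t] with hγ
  have hγ0' : ∀ t, γ t 0 = xc t := fun t => rfl
  have hγ1' : ∀ t, γ t 1 = yc t := fun t => rfl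
  -- xc maps [0,1] into [x₁,x₂]
  have hxcmem : ∀ t ∈ Set.Icc (0:ℝ) 1, xc t ∈ Set.Icc x₁ x₂ := by
    intro t ht
    obtain ⟨ht0, ht1⟩ := ht
    show x₁ ≤ a 0 + t * (b 0 - a 0) ∧ a 0 + t * (b 0 - a 0) ≤ x₂
    constructor
    · nlinarith [mul_nonneg ht0 (sub_nonneg.2 hb1), mul_nonneg (sub_nonneg.2 ht1) (sub_nonneg.2 ha1)]
    · nlinarith [mul_nonneg ht0 (sub_nonneg.2 hb2), mul_nonneg (sub_nonneg.2 ht1) (sub_nonneg.2 ha2)]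
  -- the path stays in X
  have hmem : ∀ t ∈ Set.Icc (0:ℝ) 1, γ t ∈
      {p : EuclideanSpace ℝ (Fin 2) |
        x₁ ≤ p 0 ∧ p 0 ≤ x₂ ∧ g (p 0) ≤ p 1 ∧ p 1 ≤ f (p 0)} := by
    intro t ht
    refine ⟨(hxcmem t ht).1, (hxcmem t ht).2, ?_, ?_⟩
    · rw [hγ0' t, hγ1' t]
      exact le_max_left _ _
    · rw [hγ0' t, hγ1' t]
      exact max_le (hgf _ (hxcmem t ht)) (min_le_left _ _)
  -- endpoints
  have hend0 : γ 0 = a := by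
    have hx0 : xc 0 = a 0 := by simp [hxc]
    have hy0 : yc 0 = a 1 := by
      rw [hyc]
      simp only [hx0, hlc]
      rw [show a 1 + 0 * (b 1 - a 1) = a 1 by ring, min_eq_right ha4, max_eq_right ha3]
    ext i
    fin_cases i
    · show γ 0 0 = a 0
      exact (hγ0' 0).trans hx0
    · show γ 0 1 = a 1
      exact (hγ1' 0).trans hy0
  have hend1 : γ 1 = b := by
    have hx1 : xc 1 = b 0 := by simp [hxc]
    have hy1 : yc 1 = b 1 := by
      rw [hyc]
      simp only [hx1, hlc]
      rw [show a 1 + 1 * (b 1 - a 1) = b 1 by ring, min_eq_right hb4, max_eq_right hb3]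
    ext i
    fin_cases i
    · show γ 1 0 = b 0
      exact (hγ0' 1).trans hx1
    · show γ 1 1 = b 1
      exact (hγ1' 1).trans hy1
  -- Lipschitz estimates
  have hD0 : |b 0 - a 0| ≤ d := by
    have := coord_le_dist b a 0
    rwa [dist_comm] at this
  have hD1 : |b 1 - a 1| ≤ d := by
    have := coord_le_dist b a 1
    rwa [dist_comm] at this
  have hxclip : ∀ s t : ℝ, |xc s - xc t| ≤ d * |s - t| := by
    intro s t
    have : xc s - xc t = (s - t) * (b 0 - a 0) := by rw [hxc]; ring
    rw [this, abs_mul, mul_comm]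
    exact mul_le_mul_of_nonneg_right hD0 (abs_nonneg _)
  have hlclip : ∀ s t : ℝ, |lc s - lc t| ≤ d * |s - t| := by
    intro s t
    have : lc s - lc t = (s - t) * (b 1 - a 1) := by rw [hlc]; ring
    rw [this, abs_mul, mul_comm]
    exact mul_le_mul_of_nonneg_right hD1 (abs_nonneg _)
  have hyclip : ∀ s ∈ Set.Icc (0:ℝ) 1, ∀ t ∈ Set.Icc (0:ℝ) 1,
      |yc s - yc t| ≤ (M * d + d) * |s - t| := by
    intro s hs t ht
    have hst : (0:ℝ) ≤ |s - t| := abs_nonneg _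
    have hMd : 0 ≤ M * d * |s - t| := by positivity
    have hgl : |g (xc s) - g (xc t)| ≤ (M * d + d) * |s - t| := by
      calc |g (xc s) - g (xc t)| ≤ M * |xc s - xc t| :=
            lip_bound S hgc hgd (hxcmem t ht) (hxcmem s hs)
        _ ≤ M * (d * |s - t|) := mul_le_mul_of_nonneg_left (hxclip s t) hM.le
        _ ≤ (M * d + d) * |s - t| := by nlinarith
    have hfl : |f (xc s) - f (xc t)| ≤ (M * d + d) * |s - t| := by
      calc |f (xc s) - f (xc t)| ≤ M * |xc s - xc t| :=
            lip_bound S hfc hfd (hxcmem t ht) (hxcmem s hs)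
        _ ≤ M * (d * |s - t|) := mul_le_mul_of_nonneg_left (hxclip s t) hM.le
        _ ≤ (M * d + d) * |s - t| := by nlinarith
    have hll : |lc s - lc t| ≤ (M * d + d) * |s - t| := by
      calc |lc s - lc t| ≤ d * |s - t| := hlclip s t
        _ ≤ (M * d + d) * |s - t| := by nlinarith
    calc |yc s - yc t| ≤ max |g (xc s) - g (xc t)|
          |min (f (xc s)) (lc s) - min (f (xc t)) (lc t)| := abs_max_sub_max_le_max _ _ _ _
      _ ≤ (M * d + d) * |s - t| := by
          apply max_le hgl
          exact (abs_min_sub_min_le_max _ _ _ _).trans (max_le hfl hll)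
  -- γ is Lipschitz on [0,1] with constant (M+2)*d
  have hlip : LipschitzOnWith (((M + 2) * d).toNNReal) γ (Set.Icc 0 1) := by
    apply LipschitzOnWith.of_dist_le_mul
    intro s hs t ht
    have hcoe : (((M + 2) * d).toNNReal : ℝ) = (M + 2) * d :=
      Real.coe_toNNReal _ (by positivity)
    rw [hcoe, Real.dist_eq]
    calc dist (γ s) (γ t) ≤ |xc s - xc t| + |yc s - yc t| := dist_pair_le _ _ _ _
      _ ≤ d * |s - t| + (M * d + d) * |s - t| := add_le_add (hxclip s t) (hyclip s hs t ht)
      _ = (M + 2) * d * |s - t| := by ring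
  -- variation of γ is at most (M+2)*d
  have hvar : eVariationOn γ (Set.Icc 0 1) ≤ ENNReal.ofReal ((M + 2) * d) := by
    have hid : eVariationOn (fun x : ℝ => x) (Set.Icc (0:ℝ) 1) ≤ ENNReal.ofReal 1 := by
      have := MonotoneOn.eVariationOn_le (f := fun x : ℝ => x) (s := Set.Icc (0:ℝ) 1)
        (fun x _ y _ h => h) (Set.left_mem_Icc.2 zero_le_one) (Set.right_mem_Icc.2 zero_le_one)
      rw [Set.inter_self] at this
      simpa using this
    have hcomp := hlip.comp_eVariationOn_le (g := fun x : ℝ => x) (s := Set.Icc (0:ℝ) 1)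
      (Set.mapsTo_id _)
    have hγid : γ ∘ (fun x : ℝ => x) = γ := rfl
    rw [hγid] at hcomp
    calc eVariationOn γ (Set.Icc 0 1)
        ≤ (((M + 2) * d).toNNReal : ENNReal) * eVariationOn (fun x : ℝ => x) (Set.Icc 0 1) :=
          hcomp
      _ ≤ ENNReal.ofReal ((M + 2) * d) * ENNReal.ofReal 1 := by
          exact mul_le_mul_right hid _
      _ = ENNReal.ofReal ((M + 2) * d) := by simp
  calc innerDist _ a b ≤ eVariationOn γ (Set.Icc 0 1) :=
        iInf_le_of_le γ (iInf_le _ ⟨hend0, hend1, hmem⟩)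
    _ ≤ ENNReal.ofReal ((M + 2) * d) := hvar
end
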